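/- Let b ≥ 2 be an integer. For any real numbers α and x with x ≥ 1, | ∑_{n ∈ 𝒫⁰_b(x)} e(αn) | ≤ b² · ∑_{0 ≤ N ≤ (1/2)log_b x} ∑_{0 ≤ M ≤ N} Φ_M(α b^{N−M}), where N and M run over integers. -/

import Mathlib

/-!
A palindrome with `2N + 1` base-`b` digits is determined by its upper half
`t = t_N ⋯ t_0 ∈ [b^N, b^{N+1})`: it is the digit sum `∑_{j ≤ N} t_j w_j` with
`w_j = b^{N+j} + b^{N-j}` (`w_0 = b^N`), and `t` is recovered as the quotient by `b^N`, so the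
palindromes up to `X` correspond to an initial segment of `[b^N, b^{N+1})`. For a digit sum the
exponential sum over an aligned block of length `b^L` factors as `∏_{i<L} φ_b(α w_i)`, and an
interval of length at most `b^{N+1}` starting at `b^N` splits into at most `b` aligned blocks of
each length `b^L`, `L ≤ N`. Finally, `i ↦ L - i` turns `∏_{1 ≤ i < L} φ_b(α w_i)` into
`Φ_L(α b^{N-L})`, and the remaining factor `φ_b(α w_0)` is at most `b`.
-/

open Real

/-- `e(x) = exp(2πix)`. -/
noncomputable def eC (x : ℝ) : ℂ := Complex.exp (2 * Real.pi * Complex.I * x)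

/-- `φ_b(α) = |∑_{0 ≤ m < b} e(αm)|`. -/
noncomputable def phiB (b : ℕ) (α : ℝ) : ℝ :=
  ‖∑ m ∈ Finset.range b, eC (α * m)‖

/-- `Φ_N(α) = ∏_{1 ≤ n < N} φ_b(α(bⁿ + b^{2N-n}))`, equal to `1` for `N ≤ 1`. -/
noncomputable def PhiB (b N : ℕ) (α : ℝ) : ℝ :=
  ∏ n ∈ Finset.Ico 1 N, phiB b (α * ((b : ℝ) ^ n + (b : ℝ) ^ (2 * N - n)))

open Finset

theorem eC_add (x y : ℝ) : eC (x + y) = eC x * eC y := by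
  simp only [eC, ← Complex.exp_add]
  push_cast
  ring_nf

theorem norm_eC (x : ℝ) : ‖eC x‖ = 1 := by
  rw [eC, show 2 * Real.pi * Complex.I * (x : ℂ) = ((2 * Real.pi * x : ℝ) : ℂ) * Complex.I by
    push_cast; ring]
  exact Complex.norm_exp_ofReal_mul_I _

theorem phiB_le (b : ℕ) (β : ℝ) : phiB b β ≤ b := by
  refine (norm_sum_le _ _).trans ?_
  simp [norm_eC]

theorem sum_Ico_add_mul_eq_sum_blocks {M : Type*} [AddCommMonoid M] (g : ℕ → M) (a q K : ℕ) :
    ∑ t ∈ Ico a (a + q * K), g t = ∑ i ∈ range q, ∑ t ∈ Ico (a + i * K) (a + i * K + K), g t := by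
  induction q with
  | zero => simp
  | succ q ih =>
    rw [sum_range_succ, ← ih, show a + (q + 1) * K = a + q * K + K by ring,
      sum_Ico_consecutive _ (by omega) (by omega)]

theorem norm_sum_Ico_mul_le {E : Type*} [SeminormedAddCommGroup E] (f : ℕ → E) {K : ℕ} {C : ℝ}
    (hC : ∀ v, ‖∑ t ∈ Ico (v * K) (v * K + K), f t‖ ≤ C) (w q : ℕ) :
    ‖∑ t ∈ Ico (w * K) (w * K + q * K), f t‖ ≤ q * C := by
  rw [sum_Ico_add_mul_eq_sum_blocks]
  refine (norm_sum_le _ _).trans ?_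
  simpa [← add_mul] using sum_le_card_nsmul (range q) _ C fun i _ => hC (w + i)

theorem norm_sum_Ico_le_of_norm_block_le {E : Type*} [SeminormedAddCommGroup E] (f : ℕ → E)
    {b M : ℕ} (hb : 0 < b) (C : ℕ → ℝ)
    (hC : ∀ L ≤ M, ∀ v, ‖∑ t ∈ Ico (v * b ^ L) (v * b ^ L + b ^ L), f t‖ ≤ C L)
    (w r : ℕ) (hr : r ≤ b * b ^ M) :
    ‖∑ t ∈ Ico (w * b ^ M) (w * b ^ M + r), f t‖ ≤ ∑ L ∈ range (M + 1), b * C L := by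
  have hC0 : ∀ L ≤ M, 0 ≤ C L := fun L hL => (norm_nonneg _).trans (hC L hL 0)
  induction M generalizing w r with
  | zero =>
    have hr' : (r : ℝ) ≤ b := by exact_mod_cast (by simpa using hr)
    simpa using (norm_sum_Ico_mul_le f (K := 1) (by simpa using hC 0 le_rfl) w r).trans
      (mul_le_mul_of_nonneg_right hr' (hC0 0 le_rfl))
  | succ M ih =>
    obtain ⟨q, r₀, hq, hr₀, rfl⟩ : ∃ q r₀, q ≤ b ∧ r₀ ≤ b * b ^ M ∧ r = q * b ^ (M + 1) + r₀ :=
      ⟨r / b ^ (M + 1), r % b ^ (M + 1), Nat.div_le_of_le_mul (by rwa [mul_comm]),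
        (Nat.mod_lt _ (by positivity)).le.trans_eq (pow_succ' b M), (Nat.div_add_mod' _ _).symm⟩
    have hfull : ‖∑ t ∈ Ico (w * b ^ (M + 1)) (w * b ^ (M + 1) + q * b ^ (M + 1)), f t‖ ≤
        b * C (M + 1) :=
      (norm_sum_Ico_mul_le f (hC (M + 1) le_rfl) w q).trans
        (mul_le_mul_of_nonneg_right (by exact_mod_cast hq) (hC0 _ le_rfl))
    have hrest := ih (fun L hL => hC L (by omega)) ((w + q) * b) r₀ hr₀ fun L hL => hC0 L (by omega)
    rw [show (w + q) * b * b ^ M = w * b ^ (M + 1) + q * b ^ (M + 1) by ring] at hrest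
    rw [← add_assoc, ← sum_Ico_consecutive _ (Nat.le_add_right _ _) (Nat.le_add_right _ _),
      sum_range_succ]
    exact (norm_add_le _ _).trans ((add_le_add hfull hrest).trans_eq (add_comm _ _))

theorem add_div_pow_mod_eq {b L s : ℕ} (hb : 0 < b) (hs : s < b ^ L) (v j : ℕ) :
    (v * b ^ L + s) / b ^ j % b = v * b ^ L / b ^ j % b + s / b ^ j % b := by
  rcases lt_or_ge j L with hj | hj
  · obtain ⟨k, rfl⟩ : ∃ k, L = j + k + 1 := ⟨L - j - 1, by omega⟩
    rw [show v * b ^ (j + k + 1) = v * b ^ k * b * b ^ j by ring, Nat.add_comm,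
      Nat.add_mul_div_right _ _ (by positivity), Nat.mul_div_cancel _ (by positivity),
      Nat.add_mul_mod_self_right, Nat.mul_mod_left, zero_add]
  · obtain ⟨k, rfl⟩ : ∃ k, j = L + k := ⟨j - L, by omega⟩
    have hs' : s / b ^ (L + k) = 0 :=
      Nat.div_eq_of_lt (hs.trans_le (Nat.pow_le_pow_right hb (Nat.le_add_right _ _)))
    rw [pow_add, ← Nat.div_div_eq_div_mul, ← Nat.div_div_eq_div_mul, Nat.add_comm,
      Nat.add_mul_div_right _ _ (by positivity), Nat.div_eq_of_lt hs, zero_add, ← pow_add, hs',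
      Nat.mul_div_cancel _ (by positivity), Nat.zero_mod, add_zero]

theorem mul_pow_div_pow_mod {b m : ℕ} (hm : m < b) (i j : ℕ) :
    m * b ^ i / b ^ j % b = if j = i then m else 0 := by
  have hb : 0 < b := by omega
  rcases lt_trichotomy j i with hj | rfl | hj
  · obtain ⟨k, rfl⟩ : ∃ k, i = j + k + 1 := ⟨i - j - 1, by omega⟩
    rw [if_neg (by omega), show m * b ^ (j + k + 1) = m * b ^ k * b * b ^ j by ring,
      Nat.mul_div_cancel _ (by positivity), Nat.mul_mod_left]
  · rw [Nat.mul_div_cancel _ (by positivity), Nat.mod_eq_of_lt hm, if_pos rfl]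
  · rw [if_neg (by omega), Nat.div_eq_of_lt, Nat.zero_mod]
    calc m * b ^ i < b * b ^ i := Nat.mul_lt_mul_of_pos_right hm (by positivity)
      _ = b ^ (i + 1) := (pow_succ' b i).symm
      _ ≤ b ^ j := Nat.pow_le_pow_right hb hj

def digitSum (b K : ℕ) (w : ℕ → ℕ) (t : ℕ) : ℕ := ∑ j ∈ range K, t / b ^ j % b * w j

section digitSum

variable {b : ℕ} (K : ℕ) (w : ℕ → ℕ)

theorem digitSum_mul_pow_add (hb : 0 < b) {L s : ℕ} (hs : s < b ^ L) (v : ℕ) :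
    digitSum b K w (v * b ^ L + s) = digitSum b K w (v * b ^ L) + digitSum b K w s := by
  simp only [digitSum, add_div_pow_mod_eq hb hs, add_mul, sum_add_distrib]

theorem digitSum_mul_pow {m i : ℕ} (hm : m < b) (hi : i < K) :
    digitSum b K w (m * b ^ i) = m * w i := by
  simp [digitSum, mul_pow_div_pow_mod hm, hi]

theorem sum_Ico_eC_digitSum (hb : 0 < b) (α : ℝ) (L v : ℕ) :
    ∑ t ∈ Ico (v * b ^ L) (v * b ^ L + b ^ L), eC (α * digitSum b K w t) =
      eC (α * digitSum b K w (v * b ^ L)) * ∑ s ∈ range (b ^ L), eC (α * digitSum b K w s) := by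
  rw [sum_Ico_eq_sum_range, Nat.add_sub_cancel_left, mul_sum]
  refine sum_congr rfl fun s hs => ?_
  rw [digitSum_mul_pow_add K w hb (mem_range.1 hs), ← eC_add]
  push_cast
  ring_nf

theorem norm_sum_range_eC_digitSum (hb : 0 < b) (α : ℝ) {L : ℕ} (hL : L ≤ K) :
    ‖∑ s ∈ range (b ^ L), eC (α * digitSum b K w s)‖ = ∏ i ∈ range L, phiB b (α * w i) := by
  induction L with
  | zero => simp [norm_eC]
  | succ L ih =>
    have hsplit : ∑ s ∈ range (b ^ (L + 1)), eC (α * digitSum b K w s) =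
        (∑ m ∈ range b, eC (α * w L * m)) * ∑ s ∈ range (b ^ L), eC (α * digitSum b K w s) := by
      rw [range_eq_Ico, pow_succ', ← zero_add (b * b ^ L), sum_Ico_add_mul_eq_sum_blocks, sum_mul]
      refine sum_congr rfl fun m hm => ?_
      rw [zero_add, sum_Ico_eC_digitSum K w hb,
        digitSum_mul_pow K w (mem_range.1 hm) (by omega)]
      push_cast
      ring_nf
    rw [hsplit, norm_mul, ih (by omega), prod_range_succ, mul_comm]
    rfl

theorem norm_sum_Ico_eC_digitSum (hb : 0 < b) (α : ℝ) {L : ℕ} (hL : L ≤ K) (v : ℕ) :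
    ‖∑ t ∈ Ico (v * b ^ L) (v * b ^ L + b ^ L), eC (α * digitSum b K w t)‖ =
      ∏ i ∈ range L, phiB b (α * w i) := by
  rw [sum_Ico_eC_digitSum K w hb, norm_mul, norm_eC, one_mul,
    norm_sum_range_eC_digitSum K w hb α hL]

end digitSum

theorem List.reverse_tail_reverse_append_self {α : Type*} (l : List α) :
    (l.tail.reverse ++ l).reverse = l.tail.reverse ++ l := by
  cases l <;> simp

theorem List.tail_drop_reverse_append_drop {α : Type*} {l : List α} {N : ℕ}
    (hl : l.reverse = l) (hlen : l.length = 2 * N + 1) :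
    (l.drop N).tail.reverse ++ l.drop N = l := by
  rw [List.tail_drop, show N + 1 = l.length - N by omega, ← List.take_reverse, hl,
    List.take_append_drop]

theorem Nat.ofDigits_eq_sum_getD (b : ℕ) (l : List ℕ) :
    Nat.ofDigits b l = ∑ i ∈ range l.length, l.getD i 0 * b ^ i := by
  induction l with
  | nil => simp
  | cons d l ih =>
    rw [Nat.ofDigits_cons, ih, List.length_cons, sum_range_succ', mul_sum]
    simp only [List.getD_cons_succ, List.getD_cons_zero, pow_succ]
    ring_nf

theorem Nat.ofDigits_reverse_eq_sum_getD (b : ℕ) (l : List ℕ) :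
    Nat.ofDigits b l.reverse = ∑ i ∈ range l.length, l.getD i 0 * b ^ (l.length - 1 - i) := by
  induction l with
  | nil => simp
  | cons d l ih =>
    rw [Nat.ofDigits_reverse_cons, ih, List.length_cons, sum_range_succ']
    simp only [List.getD_cons_succ, List.getD_cons_zero]
    congr 1
    · exact sum_congr rfl fun i _ => by
        rw [show l.length + 1 - 1 - (i + 1) = l.length - 1 - i by omega]
    · simp [mul_comm]

theorem Nat.digits_div_pow {b : ℕ} (hb : 2 ≤ b) (n k : ℕ) :
    Nat.digits b (n / b ^ k) = (Nat.digits b n).drop k := by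
  rw [Nat.self_div_pow_eq_ofDigits_drop k n hb]
  refine Nat.digits_ofDigits b hb _ (fun d hd => Nat.digits_lt_base hb (List.mem_of_mem_drop hd))
    fun h => ?_
  rw [List.getLast_drop h]
  exact Nat.getLast_digit_ne_zero b
    (Nat.digits_ne_nil_iff_ne_zero (b := b).1 fun h' => h (by simp [h']))

theorem Nat.length_digits_div_pow {b : ℕ} (hb : 2 ≤ b) (n k : ℕ) :
    (Nat.digits b (n / b ^ k)).length = (Nat.digits b n).length - k := by
  rw [Nat.digits_div_pow hb, List.length_drop]

theorem Nat.length_digits_eq_succ_iff {b : ℕ} (hb : 1 < b) (n N : ℕ) :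
    (Nat.digits b n).length = N + 1 ↔ b ^ N ≤ n ∧ n < b ^ (N + 1) := by
  rw [← Nat.lt_digits_length_iff hb, ← Nat.digits_length_le_iff hb]
  omega

/-- The upper-half digit `t_j` of a palindrome with `2N + 1` digits sits at the positions `N + j`
and `N - j`, which coincide for `j = 0`. -/
def palWeight (b N j : ℕ) : ℕ := b ^ (N + j) + if j = 0 then 0 else b ^ (N - j)

/-- The palindrome with `2N + 1` digits whose upper half is `t`, when `b ^ N ≤ t < b ^ (N + 1)`. -/
def palindromeOf (b N t : ℕ) : ℕ := digitSum b (N + 1) (palWeight b N) t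

section palindromeOf

variable {b N t : ℕ}

theorem palindromeOf_eq_ofDigits (hb : 2 ≤ b) (ht : (Nat.digits b t).length = N + 1) :
    palindromeOf b N t = Nat.ofDigits b ((Nat.digits b t).tail.reverse ++ Nat.digits b t) := by
  have ht0 : t ≠ 0 := by rintro rfl; simp at ht
  have hupper : ∑ j ∈ range (N + 1), t / b ^ j % b * b ^ (N + j) = b ^ N * t := by
    conv_rhs => rw [← Nat.ofDigits_digits b t, Nat.ofDigits_eq_sum_getD, ht, mul_sum]
    refine sum_congr rfl fun j _ => ?_
    rw [Nat.getD_digits _ _ hb, pow_add]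
    ring
  have hlower : ∑ j ∈ range (N + 1), t / b ^ j % b * (if j = 0 then 0 else b ^ (N - j)) =
      Nat.ofDigits b (Nat.digits b t).tail.reverse := by
    rw [Nat.ofDigits_reverse_eq_sum_getD, List.length_tail, ht, sum_range_succ',
      Nat.digits_def' hb (Nat.pos_of_ne_zero ht0)]
    simp only [List.tail_cons, Nat.getD_digits _ _ hb, Nat.div_div_eq_div_mul, ← pow_succ']
    simp [Nat.sub_sub, add_comm]
  rw [Nat.ofDigits_append, Nat.ofDigits_digits, List.length_reverse, List.length_tail, ht,
    Nat.add_sub_cancel, ← hupper, ← hlower, palindromeOf, digitSum, ← sum_add_distrib]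
  simp only [palWeight, mul_add, add_comm]

theorem digits_palindromeOf (hb : 2 ≤ b) (ht : (Nat.digits b t).length = N + 1) :
    Nat.digits b (palindromeOf b N t) = (Nat.digits b t).tail.reverse ++ Nat.digits b t := by
  have ht0 : t ≠ 0 := by rintro rfl; simp at ht
  rw [palindromeOf_eq_ofDigits hb ht]
  refine Nat.digits_ofDigits b hb _ (fun d hd => ?_) fun _ => ?_
  · rcases List.mem_append.1 hd with hd | hd
    · exact Nat.digits_lt_base hb (List.mem_of_mem_tail (List.mem_reverse.1 hd))
    · exact Nat.digits_lt_base hb hd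
  · rw [List.getLast_append_of_right_ne_nil _ _ (Nat.digits_ne_nil_iff_ne_zero.2 ht0)]
    exact Nat.getLast_digit_ne_zero b ht0

theorem palindromeOf_div_pow (hb : 2 ≤ b) (ht : (Nat.digits b t).length = N + 1) :
    palindromeOf b N t / b ^ N = t := by
  have hlen : ((Nat.digits b t).tail.reverse).length = N := by simp [ht]
  rw [← Nat.ofDigits_digits b (palindromeOf b N t / b ^ N), Nat.digits_div_pow hb,
    digits_palindromeOf hb ht, ← hlen, List.drop_left, Nat.ofDigits_digits]

theorem palindromeOf_div_pow_eq_self {n : ℕ} (hb : 2 ≤ b)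
    (hpal : (Nat.digits b n).reverse = Nat.digits b n)
    (hlen : (Nat.digits b n).length = 2 * N + 1) :
    palindromeOf b N (n / b ^ N) = n := by
  have ht : (Nat.digits b (n / b ^ N)).length = N + 1 := by
    rw [Nat.length_digits_div_pow hb, hlen]
    omega
  rw [← Nat.ofDigits_digits b (palindromeOf b N _), digits_palindromeOf hb ht,
    Nat.digits_div_pow hb, List.tail_drop_reverse_append_drop hpal hlen, Nat.ofDigits_digits]

end palindromeOf

theorem filter_Ico_eq_Ico_of_antitoneOn {p : ℕ → Prop} [DecidablePred p] {a c : ℕ}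
    (hp : AntitoneOn p (Set.Ico a c)) : ∃ T ≤ c, (Ico a c).filter p = Ico a T := by
  induction c with
  | zero => exact ⟨0, le_rfl, by simp⟩
  | succ c ih =>
    rcases lt_or_ge c a with hca | hac
    · exact ⟨c + 1, le_rfl, by simp [Ico_eq_empty_of_le (show a ≥ c + 1 by omega)]⟩
    rw [Nat.Ico_succ_right_eq_insert_Ico hac, filter_insert]
    by_cases hpc : p c
    · have hall : ∀ s ∈ Ico a c, p s := fun s hs => by
        obtain ⟨has, hsc⟩ := mem_Ico.1 hs
        exact hp ⟨has, by omega⟩ ⟨hac, by omega⟩ hsc.le hpc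
      exact ⟨c + 1, le_rfl, by
        rw [if_pos hpc, filter_true_of_mem hall, Nat.Ico_succ_right_eq_insert_Ico hac]⟩
    · obtain ⟨T, hT, hfilter⟩ := ih (hp.mono fun s hs => ⟨hs.1, by have := hs.2; omega⟩)
      exact ⟨T, by omega, by rw [if_neg hpc, hfilter]⟩

theorem palindromeOf_strictMonoOn {b : ℕ} (hb : 2 ≤ b) (N : ℕ) :
    StrictMonoOn (palindromeOf b N) (Set.Ico (b ^ N) (b ^ (N + 1))) := by
  intro s hs t ht hst
  rw [Set.mem_Ico, ← Nat.length_digits_eq_succ_iff hb] at hs ht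
  exact Nat.lt_of_div_lt_div (c := b ^ N) (by rwa [palindromeOf_div_pow hb hs,
    palindromeOf_div_pow hb ht])

theorem sum_palindromes_eq_sum_palindromeOf {M : Type*} [AddCommMonoid M] {b : ℕ} (hb : 2 ≤ b)
    (f : ℕ → M) (N X : ℕ) :
    ∑ n ∈ (Icc 1 X).filter
        (fun n => (Nat.digits b n).reverse = Nat.digits b n ∧ Nat.log b n = 2 * N), f n =
      ∑ t ∈ (Ico (b ^ N) (b ^ (N + 1))).filter (fun t => palindromeOf b N t ≤ X),
        f (palindromeOf b N t) := by
  have hA : ∀ n, n ∈ (Icc 1 X).filter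
      (fun n => (Nat.digits b n).reverse = Nat.digits b n ∧ Nat.log b n = 2 * N) ↔
      n ≤ X ∧ (Nat.digits b n).reverse = Nat.digits b n ∧ (Nat.digits b n).length = 2 * N + 1 := by
    intro n
    simp only [mem_filter, mem_Icc]
    constructor
    · rintro ⟨⟨hn, hnX⟩, hpal, hlog⟩
      exact ⟨hnX, hpal, by rw [Nat.length_digits b n hb (by omega), hlog]⟩
    · rintro ⟨hnX, hpal, hlen⟩
      have hn : n ≠ 0 := by rintro rfl; simp at hlen
      exact ⟨⟨by omega, hnX⟩, hpal, by rw [Nat.length_digits b n hb hn] at hlen; omega⟩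
  have hQ : ∀ t, t ∈ (Ico (b ^ N) (b ^ (N + 1))).filter (fun t => palindromeOf b N t ≤ X) ↔
      (Nat.digits b t).length = N + 1 ∧ palindromeOf b N t ≤ X := by
    intro t
    rw [mem_filter, mem_Ico, Nat.length_digits_eq_succ_iff hb]
  refine sum_nbij' (· / b ^ N) (palindromeOf b N) (fun n hn => ?_) (fun t ht => ?_)
    (fun n hn => ?_) (fun t ht => ?_) (fun n hn => ?_)
  · obtain ⟨hnX, hpal, hlen⟩ := (hA n).1 hn
    refine (hQ _).2 ⟨by rw [Nat.length_digits_div_pow hb, hlen]; omega, ?_⟩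
    rwa [palindromeOf_div_pow_eq_self hb hpal hlen]
  · obtain ⟨ht, htX⟩ := (hQ t).1 ht
    refine (hA _).2 ⟨htX, ?_, ?_⟩ <;> rw [digits_palindromeOf hb ht]
    · exact List.reverse_tail_reverse_append_self _
    · simp [ht]
      omega
  · obtain ⟨-, hpal, hlen⟩ := (hA n).1 hn
    exact palindromeOf_div_pow_eq_self hb hpal hlen
  · exact palindromeOf_div_pow hb ((hQ t).1 ht).1
  · obtain ⟨-, hpal, hlen⟩ := (hA n).1 hn
    rw [palindromeOf_div_pow_eq_self hb hpal hlen]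

theorem prod_phiB_palWeight_le {b N L : ℕ} (hb : 1 ≤ b) (hL : L ≤ N) (α : ℝ) :
    ∏ i ∈ range L, phiB b (α * palWeight b N i) ≤ b * PhiB b L (α * (b : ℝ) ^ (N - L)) := by
  rcases Nat.eq_zero_or_pos L with rfl | hL0
  · simpa [PhiB] using hb
  have hreflect :
      ∏ i ∈ Ico 1 L, phiB b (α * palWeight b N i) = PhiB b L (α * (b : ℝ) ^ (N - L)) := by
    have h := prod_Ico_reflect (fun n => phiB b (α * (b : ℝ) ^ (N - L) *
      ((b : ℝ) ^ n + (b : ℝ) ^ (2 * L - n)))) 1 (show L ≤ L + 1 by omega)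
    rw [show L + 1 - L = 1 by omega, show L + 1 - 1 = L by omega] at h
    rw [PhiB, ← h]
    refine prod_congr rfl fun i hi => ?_
    obtain ⟨hi1, hiL⟩ := mem_Ico.1 hi
    rw [palWeight, if_neg (by omega), mul_assoc, mul_add, ← pow_add, ← pow_add]
    push_cast
    rw [show N - L + (L - i) = N - i by omega, show N - L + (2 * L - (L - i)) = N + i by omega,
      add_comm]
  rw [range_eq_Ico, prod_eq_prod_Ico_succ_bot hL0, hreflect]
  exact mul_le_mul_of_nonneg_right (phiB_le _ _) (prod_nonneg fun _ _ => norm_nonneg _)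

theorem norm_sum_palindromes_le {b : ℕ} (hb : 2 ≤ b) (α : ℝ) (N X : ℕ) :
    ‖∑ n ∈ (Icc 1 X).filter
        (fun n => (Nat.digits b n).reverse = Nat.digits b n ∧ Nat.log b n = 2 * N), eC (α * n)‖ ≤
      (b : ℝ) ^ 2 * ∑ M ∈ range (N + 1), PhiB b M (α * (b : ℝ) ^ (N - M)) := by
  obtain ⟨T, hT, hfilter⟩ := filter_Ico_eq_Ico_of_antitoneOn (p := fun t => palindromeOf b N t ≤ X)
    fun s hs t ht hst htX => ((palindromeOf_strictMonoOn hb N).monotoneOn hs ht hst).trans htX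
  have hinterval : Ico (b ^ N) T = Ico (1 * b ^ N) (1 * b ^ N + (T - b ^ N)) := by
    ext
    simp only [mem_Ico]
    omega
  rw [sum_palindromes_eq_sum_palindromeOf hb, hfilter, hinterval]
  have hblock : ∀ L ≤ N, ∀ v, ‖∑ t ∈ Ico (v * b ^ L) (v * b ^ L + b ^ L),
      eC (α * palindromeOf b N t)‖ ≤ ∏ i ∈ range L, phiB b (α * palWeight b N i) :=
    fun L hL v => (norm_sum_Ico_eC_digitSum _ _ (by omega) α (by omega) v).le
  calc _ ≤ ∑ L ∈ range (N + 1), b * ∏ i ∈ range L, phiB b (α * palWeight b N i) :=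
        norm_sum_Ico_le_of_norm_block_le _ (by omega) _ hblock 1 _
          (by rw [← pow_succ']; omega)
    _ ≤ ∑ L ∈ range (N + 1), b * (b * PhiB b L (α * (b : ℝ) ^ (N - L))) :=
        sum_le_sum fun L hL => mul_le_mul_of_nonneg_left
          (prod_phiB_palWeight_le (by omega) (Nat.lt_succ_iff.1 (mem_range.1 hL)) α)
          (Nat.cast_nonneg b)
    _ = _ := by simp only [mul_sum, ← mul_assoc, sq]

theorem Nat.log_div_two_le_floor_logb {b n : ℕ} (hb : 1 < b) (hn : n ≠ 0) {x : ℝ}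
    (hnx : (n : ℝ) ≤ x) : Nat.log b n / 2 ≤ ⌊Real.logb b x / 2⌋₊ := by
  refine Nat.le_floor (Nat.cast_div_le.trans (div_le_div_of_nonneg_right ?_ zero_le_two))
  exact (Real.natLog_le_logb n b).trans
    (Real.logb_le_logb_of_le (by exact_mod_cast hb) (by positivity) hnx)

theorem exp_sum_over_palindromes_bound_general (b : ℕ) (hb : 2 ≤ b) (α x : ℝ) :
    ‖∑ n ∈ (Finset.Icc 1 ⌊x⌋₊).filter
        (fun n => (Nat.digits b n).reverse = Nat.digits b n ∧ Nat.log b n % 2 = 0),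
      eC (α * n)‖ ≤
    (b : ℝ) ^ 2 * ∑ N ∈ Finset.range (⌊Real.logb b x / 2⌋₊ + 1), ∑ M ∈ Finset.range (N + 1),
      PhiB b M (α * (b : ℝ) ^ (N - M)) := by
  have hmaps : ∀ n ∈ (Icc 1 ⌊x⌋₊).filter
      (fun n => (Nat.digits b n).reverse = Nat.digits b n ∧ Nat.log b n % 2 = 0),
      Nat.log b n / 2 ∈ range (⌊Real.logb b x / 2⌋₊ + 1) := by
    intro n hn
    obtain ⟨⟨hn1, hnx⟩, -⟩ := mem_filter.1 hn |>.imp_left mem_Icc.1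
    exact mem_range_succ_iff.2 (Nat.log_div_two_le_floor_logb hb (by omega)
      ((Nat.le_floor_iff' (by omega)).1 hnx))
  rw [← sum_fiberwise_of_maps_to hmaps, mul_sum]
  refine (norm_sum_le _ _).trans (sum_le_sum fun N _ => ?_)
  rw [filter_filter, filter_congr fun n _ => show ((_ ∧ _) ∧ _) ↔ (_ ∧ Nat.log b n = 2 * N) by
    rw [and_assoc]; exact and_congr_right fun _ => by omega]
  exact norm_sum_palindromes_le hb α N ⌊x⌋₊

/-- Exponential sums over palindromes with an odd number of digits are bounded by linear
combinations of the products `Φ_M`. -/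
theorem exp_sum_over_palindromes_bound (b : ℕ) (hb : 2 ≤ b) (α x : ℝ) (hx : 1 ≤ x) :
    ‖∑ n ∈ (Finset.Icc 1 ⌊x⌋₊).filter
        (fun n => (Nat.digits b n).reverse = Nat.digits b n ∧ Nat.log b n % 2 = 0),
      eC (α * n)‖ ≤
    (b : ℝ) ^ 2 * ∑ N ∈ Finset.range (⌊Real.logb b x / 2⌋₊ + 1), ∑ M ∈ Finset.range (N + 1),
      PhiB b M (α * (b : ℝ) ^ (N - M)) :=
  exp_sum_over_palindromes_bound_general b hb α x
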